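/- If G is a 2-connected graph whose vertex set can be partitioned into the vertex sets of two cable paths, then G can be transformed into a cactus by contracting at most 3 edges. -/

import Mathlib

open SimpleGraph

universe u v

/-- A cactus: a connected graph in which every edge lies on at most one cycle
(any two cycles through a common edge have the same edge set). -/
def IsCactus {V : Type u} (G : SimpleGraph V) : Prop :=
  G.Connected ∧ ∀ (e : Sym2 V) (a b : V) (c₁ : G.Walk a a) (c₂ : G.Walk b b),
    c₁.IsCycle → c₂.IsCycle → e ∈ c₁.edges → e ∈ c₂.edges →
    {e' | e' ∈ c₁.edges} = {e' | e' ∈ c₂.edges}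

/-- The graph `G/F` obtained by contracting the edges of `F`: its vertices are the
connected components of the subgraph spanned by the edges of `F` that lie in `G`. -/
def contract {V : Type u} (G : SimpleGraph V) (F : Set (Sym2 V)) :
    SimpleGraph (SimpleGraph.fromEdgeSet F ⊓ G).ConnectedComponent where
  Adj a b := a ≠ b ∧ ∃ x y : V, G.Adj x y ∧
      (SimpleGraph.fromEdgeSet F ⊓ G).connectedComponentMk x = a ∧
      (SimpleGraph.fromEdgeSet F ⊓ G).connectedComponentMk y = b
  symm := by
    refine ⟨?_⟩
    rintro a b ⟨hne, x, y, hadj, hx, hy⟩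
    exact ⟨hne.symm, y, x, hadj.symm, hy, hx⟩
  loopless := by
    refine ⟨?_⟩
    rintro a ⟨hne, -⟩
    exact hne rfl

/-- A cut-vertex of `G`: removing it disconnects the graph. -/
def IsCutVertex {V : Type u} (G : SimpleGraph V) (x : V) : Prop :=
  ¬ (G.induce ({x}ᶜ : Set V)).Connected

/-- 2-connected: connected, at least 3 vertices, no cut-vertex. -/
def TwoConnected {V : Type u} (G : SimpleGraph V) : Prop :=
  G.Connected ∧ 3 ≤ Nat.card V ∧ ∀ x : V, (G.induce ({x}ᶜ : Set V)).Connected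

/-- A cable path: a path whose internal vertices are adjacent exactly to their
two neighbours on the path. -/
def IsCablePath {V : Type u} (G : SimpleGraph V) (l : List V) : Prop :=
  l ≠ [] ∧ l.Nodup ∧ l.Chain' G.Adj ∧
  ∀ (i : ℕ) (h2 : i + 1 < l.length) (_h1 : 1 ≤ i) (y : V),
    G.Adj (l.get ⟨i, by omega⟩) y ↔
      (y = l.get ⟨i - 1, by omega⟩ ∨ y = l.get ⟨i + 1, h2⟩)

/-- `G` is contractible to `H` via `ψ`: preimages are connected witness sets and
`H`-adjacency corresponds to existence of crossing edges of `G`. -/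
def IsContraction {V : Type u} {W : Type v} (G : SimpleGraph V) (H : SimpleGraph W)
    (ψ : V → W) : Prop :=
  Function.Surjective ψ ∧
  (∀ t : W, (G.induce (ψ ⁻¹' {t})).Connected) ∧
  (∀ t t' : W, H.Adj t t' ↔ t ≠ t' ∧ ∃ x y : V, G.Adj x y ∧ ψ x = t ∧ ψ y = t')

/-- The witness set of `t` is big: it contains at least two vertices. -/
def BigWitness {V : Type u} {W : Type v} (ψ : V → W) (t : W) : Prop :=
  ∃ a b : V, a ≠ b ∧ ψ a = t ∧ ψ b = t

/-- A 3-colouring `f` of `V(G)` is compatible with the `T`-witness structure given by `ψ`: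
witness sets are monochromatic, adjacent big witness sets get distinct colours, and
endpoints of cable paths in `T` between two big witness sets through singleton witness
sets are coloured differently from their path-neighbours. -/
def Compatible {V : Type u} {W : Type v} (T : SimpleGraph W) (ψ : V → W)
    (f : V → Fin 3) : Prop :=
  (∀ x y : V, ψ x = ψ y → f x = f y) ∧
  (∀ t t' : W, BigWitness ψ t → BigWitness ψ t' → T.Adj t t' →
    ∀ x y : V, ψ x = t → ψ y = t' → f x ≠ f y) ∧
  (∀ l : List W, IsCablePath T l → ∀ (hlen : 3 ≤ l.length),
    BigWitness ψ (l.get ⟨0, by omega⟩) →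
    BigWitness ψ (l.get ⟨l.length - 1, by omega⟩) →
    (∀ (i : ℕ) (h : i < l.length), 1 ≤ i → i < l.length - 1 →
      ¬ BigWitness ψ (l.get ⟨i, h⟩)) →
    ((∀ x y : V, ψ x = l.get ⟨0, by omega⟩ → ψ y = l.get ⟨1, by omega⟩ → f x ≠ f y) ∧
     (∀ x y : V, ψ x = l.get ⟨l.length - 1, by omega⟩ →
        ψ y = l.get ⟨l.length - 2, by omega⟩ → f x ≠ f y)))

/-- The graph `G - Z`, seen as a graph on all of `V`: edges of `G` avoiding `Z`. -/
def restrictOutside {V : Type u} (G : SimpleGraph V) (Z : Set V) : SimpleGraph V where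
  Adj x y := G.Adj x y ∧ x ∉ Z ∧ y ∉ Z
  symm := by refine ⟨?_⟩; rintro x y ⟨h, hx, hy⟩; exact ⟨h.symm, hy, hx⟩
  loopless := by refine ⟨?_⟩; rintro x ⟨h, -, -⟩; exact G.ne_of_adj h rfl

/-- `Z` is a core of `G`: every connected component of `G - Z` is an isolated vertex
or (the vertex set of) a cable path of `G`. -/
def IsCore {V : Type u} (G : SimpleGraph V) (Z : Set V) : Prop :=
  ∀ x ∉ Z, {u | (restrictOutside G Z).Reachable x u} = {x} ∨
    ∃ l : List V, IsCablePath G l ∧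
      {u | (restrictOutside G Z).Reachable x u} = {u | u ∈ l}

/-- A connected core. -/
def IsConnectedCore {V : Type u} (G : SimpleGraph V) (Z : Set V) : Prop :=
  (G.induce Z).Connected ∧ IsCore G Z

/-- `B` induces a nonempty connected subgraph without cut-vertices. -/
def NoCutVertexSet {V : Type u} (G : SimpleGraph V) (B : Set V) : Prop :=
  B.Nonempty ∧ (G.induce B).Connected ∧
  ∀ x ∈ B, (B \ {x}).Nonempty → (G.induce (B \ {x})).Connected

/-- A block of `G`: a maximal set inducing a connected subgraph without cut-vertices. -/
def IsBlock {V : Type u} (G : SimpleGraph V) (B : Set V) : Prop :=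
  NoCutVertexSet G B ∧ ∀ B' : Set V, B ⊆ B' → NoCutVertexSet G B' → B = B'

/-- `B` is the vertex set of an induced cycle of `G`. -/
def IsCycleSet {V : Type u} (G : SimpleGraph V) (B : Set V) : Prop :=
  ∃ (a : V) (c : G.Walk a a), c.IsCycle ∧ {x | x ∈ c.support} = B ∧
    ∀ x ∈ B, ∀ y ∈ B, G.Adj x y → s(x, y) ∈ c.edges

/-- `G` can be turned into a cactus by contracting at most `k` edges. -/
def KContractibleToCactus {V : Type u} (G : SimpleGraph V) (k : ℕ) : Prop :=
  ∃ F : Set (Sym2 V), F ⊆ G.edgeSet ∧ F.ncard ≤ k ∧ IsCactus (contract G F)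

/-- `G` has a tree decomposition of width at most `w`. -/
def HasTreewidthAtMost {V : Type u} (G : SimpleGraph V) (w : ℕ) : Prop :=
  ∃ (ι : Type u) (T : SimpleGraph ι) (β : ι → Set V),
    T.Connected ∧ T.IsAcyclic ∧
    (∀ x : V, ∃ i, x ∈ β i) ∧
    (∀ ⦃x y : V⦄, G.Adj x y → ∃ i, x ∈ β i ∧ y ∈ β i) ∧
    (∀ (x : V) (i j : ι), x ∈ β i → x ∈ β j →
      ∀ p : T.Walk i j, p.IsPath → ∀ z ∈ p.support, x ∈ β z) ∧
    (∀ i, (β i).ncard ≤ w + 1)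

/-!
Let `A` be the set of the at most four endpoints of `P` and `Q`, and contract at most three
edges of `G[A]` that span its components. Every other vertex is an interior vertex of a cable
path, so it stays a singleton class of degree at most two, and every endpoint has at most one
neighbour outside `A`; hence a class of degree at least three contains at least three endpoints,
and there is at most one such class. A connected graph with at most one vertex of degree at
least three is a cactus: a cycle through an edge of another cycle `C` can leave `C` only at a
vertex of degree at least three, and started at that vertex it never does.
-/

namespace SimpleGraph

variable {V : Type u} {G : SimpleGraph V}

def IsClosedAt (G : SimpleGraph V) (S : Set (Sym2 V)) (v : V) : Prop :=
  ∀ y z, G.Adj v y → G.Adj v z → s(v, y) ∈ S → s(v, z) ∈ S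

theorem Walk.IsCycle.isClosedAt_edges {a v : V} {c : G.Walk a a} (hc : c.IsCycle)
    (hdeg : (G.neighborSet v).encard < 3) : G.IsClosedAt {e | e ∈ c.edges} v := by
  intro y u _ hvu hy
  have hv := c.fst_mem_support_of_mem_edges hy
  show s(v, u) ∈ c.edges
  rw [← c.mem_edges_toSubgraph, Subgraph.mem_edgeSet]
  by_contra hnot
  have htwo := hc.ncard_neighborSet_toSubgraph_eq_two hv
  have hfin : (c.toSubgraph.neighborSet v).Finite := Set.finite_of_ncard_pos (by omega)
  have hsub : insert u (c.toSubgraph.neighborSet v) ⊆ G.neighborSet v :=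
    Set.insert_subset hvu (c.toSubgraph.neighborSet_subset v)
  have := (Set.encard_mono hsub).trans_lt hdeg
  rw [Set.encard_insert_of_notMem (s := c.toSubgraph.neighborSet v) hnot,
    ← hfin.cast_ncard_eq, htwo] at this
  exact absurd this (by norm_num)

theorem Walk.edges_subset_of_isClosedAt {u v : V} (w : G.Walk u v) {S : Set (Sym2 V)}
    (hS : ∀ k, 0 < k → k < w.length → G.IsClosedAt S (w.getVert k))
    {e : Sym2 V} (he : e ∈ w.edges) (heS : e ∈ S) : ∀ f ∈ w.edges, f ∈ S := by
  let p k := s(w.getVert k, w.getVert (k + 1)) ∈ S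
  have hstep : ∀ k, k + 1 < w.length → (p k ↔ p (k + 1)) := by
    intro k hk
    have hprev := (w.adj_getVert_succ (i := k) (by omega)).symm
    have hnext := w.adj_getVert_succ (i := k + 1) hk
    simp only [p, Sym2.eq_swap (a := w.getVert k)]
    exact ⟨hS _ (by omega) hk _ _ hprev hnext, hS _ (by omega) hk _ _ hnext hprev⟩
  have hzero : ∀ k, k < w.length → (p k ↔ p 0) := by
    intro k hk
    induction k with
    | zero => rfl
    | succ k ih => exact (hstep k hk).symm.trans (ih (by omega))
  have hmem : ∀ f ∈ w.edges, ∃ k < w.length, p k ↔ f ∈ S := by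
    intro f hf
    induction f with
    | _ x y =>
      obtain ⟨k, hk, hlt⟩ := w.toSubgraph_adj_iff.mp
        ((w.mem_edges_toSubgraph (e := s(x, y))).mpr hf)
      exact ⟨k, hlt, by simp only [p, hk]⟩
  intro f hf
  obtain ⟨i, hi, hpi⟩ := hmem e he
  obtain ⟨j, hj, hpj⟩ := hmem f hf
  exact hpj.mp ((hzero j hj).mpr ((hzero i hi).mp (hpi.mpr heS)))

def highDegreeSet (G : SimpleGraph V) : Set V := {v | 3 ≤ (G.neighborSet v).encard}

theorem Walk.IsCycle.edges_subset_of_highDegreeSet_subsingleton {a b : V}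
    {c₁ : G.Walk a a} {c₂ : G.Walk b b} (hc₁ : c₁.IsCycle) (hc₂ : c₂.IsCycle)
    (hdeg : G.highDegreeSet.Subsingleton) {e : Sym2 V} (he₁ : e ∈ c₁.edges)
    (he₂ : e ∈ c₂.edges) : ∀ f ∈ c₁.edges, f ∈ c₂.edges := by
  classical
  -- started at its vertex of high degree, if any, `c₁` meets high degree only at its ends
  obtain ⟨x, hx, hlow⟩ : ∃ x ∈ c₁.support,
      ∀ v ∈ c₁.support, v ≠ x → (G.neighborSet v).encard < 3 := by
    by_cases hhigh : ∃ x ∈ c₁.support, x ∈ G.highDegreeSet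
    · obtain ⟨x, hx, hx3⟩ := hhigh
      exact ⟨x, hx, fun v _ hvx => lt_of_not_ge fun hv3 => hvx (hdeg hv3 hx3)⟩
    · push Not at hhigh
      exact ⟨a, c₁.start_mem_support, fun v hv _ => lt_of_not_ge (hhigh v hv)⟩
  have hrot : ∀ f, f ∈ (c₁.rotate x hx).edges ↔ f ∈ c₁.edges :=
    fun f => (c₁.rotate_edges x hx).mem_iff
  have hc := hc₁.rotate hx
  intro f hf
  refine (c₁.rotate x hx).edges_subset_of_isClosedAt (S := {e | e ∈ c₂.edges})
    (fun k hk0 hk => hc₂.isClosedAt_edges (hlow _ ?_ ?_)) ((hrot e).mpr he₁) he₂ f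
    ((hrot f).mpr hf)
  · exact c₁.fst_mem_support_of_mem_edges
      ((hrot _).mp (Walk.mem_edges_toSubgraph _ |>.mp
        ((c₁.rotate x hx).toSubgraph_adj_getVert hk)))
  · rw [Ne, hc.getVert_endpoint_iff hk.le]
    omega

theorem isCactus_of_subsingleton_highDegreeSet (hconn : G.Connected)
    (hdeg : G.highDegreeSet.Subsingleton) : IsCactus G :=
  ⟨hconn, fun _ _ _ _ _ hc₁ hc₂ he₁ he₂ => Set.ext fun _ =>
    ⟨hc₁.edges_subset_of_highDegreeSet_subsingleton hc₂ hdeg he₁ he₂ _,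
      hc₂.edges_subset_of_highDegreeSet_subsingleton hc₁ hdeg he₂ he₁ _⟩⟩

theorem exists_edges_ncard_le_reachable (G : SimpleGraph V) {s : Set V} (hs : s.Finite) :
    ∃ F ⊆ G.edgeSet ∩ s.sym2, F.ncard ≤ s.ncard - 1 ∧
      ∀ x ∈ s, ∀ y ∈ s, G.Adj x y → (fromEdgeSet F ⊓ G).Reachable x y := by
  -- Take `F` minimizing the number `N F` of components meeting `s` subject to
  -- `|F| + N F ≤ |s|`: adding an edge between two of these components keeps the constraint.
  let N : Set (Sym2 V) → ℕ := fun F => ((fromEdgeSet F ⊓ G).connectedComponentMk '' s).ncard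
  let good : Set (Set (Sym2 V)) := {F | F ⊆ G.edgeSet ∩ s.sym2 ∧ F.ncard + N F ≤ s.ncard}
  have hempty : ∅ ∈ good := ⟨Set.empty_subset _, by simpa [N] using Set.ncard_image_le hs⟩
  obtain ⟨F, ⟨hFsub, hFcard⟩, hmin⟩ := (measure N).wf.has_min good ⟨∅, hempty⟩
  have hspan : ∀ x ∈ s, ∀ y ∈ s, G.Adj x y → (fromEdgeSet F ⊓ G).Reachable x y := by
    intro x hx y hy hxy
    by_contra hnr
    let F' := insert s(x, y) F
    have hle : fromEdgeSet F ⊓ G ≤ fromEdgeSet F' ⊓ G :=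
      inf_le_inf_right _ (fromEdgeSet_mono (Set.subset_insert _ _))
    have himage : (fromEdgeSet F' ⊓ G).connectedComponentMk '' s =
        ConnectedComponent.map (Hom.ofLE hle) ''
          ((fromEdgeSet F ⊓ G).connectedComponentMk '' s) := by
      rw [Set.image_image]
      rfl
    have hlt : N F' < N F := by
      simp only [N, himage]
      refine (Set.ncard_image_le (hs.image _)).lt_of_ne ?_
      rw [Ne, Set.ncard_image_iff (hs.image _)]
      intro hinj
      refine hnr (ConnectedComponent.exact (hinj (Set.mem_image_of_mem _ hx)
        (Set.mem_image_of_mem _ hy) ?_))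
      simp only [ConnectedComponent.map_mk, Hom.coe_ofLE, id]
      exact ConnectedComponent.sound
        (Adj.reachable ⟨(fromEdgeSet_adj _).mpr ⟨Set.mem_insert _ _, hxy.ne⟩, hxy⟩)
    refine hmin F' ⟨Set.insert_subset ⟨hxy, hx, hy⟩ hFsub, ?_⟩ hlt
    have : F'.ncard ≤ F.ncard + 1 := Set.ncard_insert_le _ _
    omega
  refine ⟨F, hFsub, ?_, hspan⟩
  rcases s.eq_empty_or_nonempty with rfl | ⟨x, hx⟩
  · simp_all
  · have : 0 < N F := (Set.ncard_pos (hs.image _)).mpr ⟨_, Set.mem_image_of_mem _ hx⟩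
    omega

theorem contract_reachable (F : Set (Sym2 V)) {x y : V} (h : G.Reachable x y) :
    (contract G F).Reachable ((fromEdgeSet F ⊓ G).connectedComponentMk x)
      ((fromEdgeSet F ⊓ G).connectedComponentMk y) := by
  obtain ⟨w⟩ := h
  induction w with
  | nil => rfl
  | @cons x z _ hxz _ ih =>
    refine Reachable.trans ?_ ih
    by_cases hc : (fromEdgeSet F ⊓ G).connectedComponentMk x =
        (fromEdgeSet F ⊓ G).connectedComponentMk z
    · rw [hc]
    · exact Adj.reachable ⟨hc, x, z, hxz, rfl, rfl⟩

theorem contract_connected (F : Set (Sym2 V)) (hG : G.Connected) : (contract G F).Connected :=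
  have := hG.nonempty
  (connected_iff _).mpr ⟨fun c d => by
    induction c using ConnectedComponent.ind with | h x =>
    induction d using ConnectedComponent.ind with | h y =>
    exact contract_reachable F (hG.preconnected x y), inferInstance⟩

variable {A : Set V} {F : Set (Sym2 V)}

theorem eq_of_connectedComponentMk_eq_of_notMem (hFA : F ⊆ A.sym2) {x y : V} (hx : x ∉ A)
    (h : (fromEdgeSet F ⊓ G).connectedComponentMk x =
      (fromEdgeSet F ⊓ G).connectedComponentMk y) : x = y := by
  obtain ⟨w⟩ := ConnectedComponent.exact h
  cases w with
  | nil => rfl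
  | cons hxz _ => exact absurd (hFA ((fromEdgeSet_adj F).mp hxz.1).1).1 hx

theorem encard_neighborSet_contract_le_of_notMem (hFA : F ⊆ A.sym2) {x : V} (hx : x ∉ A) :
    ((contract G F).neighborSet ((fromEdgeSet F ⊓ G).connectedComponentMk x)).encard ≤
      (G.neighborSet x).encard := by
  refine (Set.encard_mono ?_).trans
    (Set.encard_image_le (fromEdgeSet F ⊓ G).connectedComponentMk (G.neighborSet x))
  rintro _ ⟨-, x', y, hxy, hx', rfl⟩
  exact ⟨y, by rwa [eq_of_connectedComponentMk_eq_of_notMem hFA hx hx'.symm], rfl⟩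

theorem encard_neighborSet_contract_le_of_preimage_subset
    (hin : ∀ a ∈ A, (G.neighborSet a \ A).Subsingleton)
    (hspan : ∀ x ∈ A, ∀ y ∈ A, G.Adj x y → (fromEdgeSet F ⊓ G).Reachable x y)
    {w : (fromEdgeSet F ⊓ G).ConnectedComponent}
    (hw : (fromEdgeSet F ⊓ G).connectedComponentMk ⁻¹' {w} ⊆ A) :
    ((contract G F).neighborSet w).encard ≤
      ((fromEdgeSet F ⊓ G).connectedComponentMk ⁻¹' {w}).encard := by
  have : ∀ a, ∃ b, a ∈ A → ∀ y ∈ G.neighborSet a \ A, y = b := fun a => by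
    by_cases h : (G.neighborSet a \ A).Nonempty
    · obtain ⟨y, hy⟩ := h
      exact ⟨y, fun ha z hz => hin a ha hz hy⟩
    · exact ⟨a, fun _ z hz => absurd ⟨z, hz⟩ h⟩
  choose g hg using this
  refine (Set.encard_mono ?_).trans (Set.encard_image_le
    ((fromEdgeSet F ⊓ G).connectedComponentMk ∘ g) _)
  rintro _ ⟨hne, x, y, hxy, rfl, rfl⟩
  have hxA : x ∈ A := hw rfl
  have hyA : y ∉ A := fun hyA => hne (ConnectedComponent.sound (hspan x hxA y hyA hxy))
  exact ⟨x, rfl, by rw [Function.comp_apply, ← hg x hxA y ⟨hxy, hyA⟩]⟩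

theorem highDegreeSet_contract_subsingleton (hA : A.encard ≤ 5)
    (hout : ∀ x ∉ A, (G.neighborSet x).encard ≤ 2)
    (hin : ∀ a ∈ A, (G.neighborSet a \ A).Subsingleton) (hFA : F ⊆ A.sym2)
    (hspan : ∀ x ∈ A, ∀ y ∈ A, G.Adj x y → (fromEdgeSet F ⊓ G).Reachable x y) :
    (contract G F).highDegreeSet.Subsingleton := by
  set π := (fromEdgeSet F ⊓ G).connectedComponentMk
  have hbig : ∀ w ∈ (contract G F).highDegreeSet,
      π ⁻¹' {w} ⊆ A ∧ 3 ≤ (π ⁻¹' {w}).encard := by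
    intro w hw
    have hsub : π ⁻¹' {w} ⊆ A := fun y hy => by
      by_contra hyA
      have := (hw.trans ((Set.mem_singleton_iff.mp hy) ▸
        encard_neighborSet_contract_le_of_notMem hFA hyA)).trans (hout y hyA)
      exact absurd this (by norm_num)
    exact ⟨hsub, hw.trans (encard_neighborSet_contract_le_of_preimage_subset hin hspan hsub)⟩
  intro w hw w' hw'
  by_contra hne
  obtain ⟨hsub, h3⟩ := hbig w hw
  obtain ⟨hsub', h3'⟩ := hbig w' hw'
  have hdisj : Disjoint (π ⁻¹' {w}) (π ⁻¹' {w'}) :=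
    Set.disjoint_left.mpr fun y hy hy' => hne (hy.symm.trans hy')
  have := (Set.encard_union_eq hdisj).symm.trans_le
    ((Set.encard_mono (Set.union_subset hsub hsub')).trans hA)
  have := add_le_add h3 h3' |>.trans this
  exact absurd this (by norm_num)

end SimpleGraph

section CablePath

variable {V : Type u} {G : SimpleGraph V} {l : List V}

def pathInterior (l : List V) : Set V :=
  {x | ∃ (i : ℕ) (h : i + 1 < l.length), 0 < i ∧ l[i] = x}

theorem encard_setOf_mem_diff_pathInterior_le_two (l : List V) :
    ({x | x ∈ l} \ pathInterior l).encard ≤ 2 := by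
  rcases Nat.eq_zero_or_pos l.length with h0 | h0
  · simp [List.length_eq_zero_iff.mp h0]
  calc _ ≤ ({l[0], l[l.length - 1]} : Set V).encard := by
        refine Set.encard_mono fun x ⟨hx, hint⟩ => ?_
        obtain ⟨i, hi, rfl⟩ := List.getElem_of_mem hx
        by_cases hi0 : i = 0
        · exact .inl (by simp only [hi0])
        by_cases hilast : i + 1 = l.length
        · exact .inr (by simp only [← hilast, Nat.add_sub_cancel, Set.mem_singleton_iff])
        exact absurd ⟨i, by omega, by omega, rfl⟩ hint
    _ ≤ 2 := (Set.encard_insert_le _ _).trans (by simp; norm_num)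

namespace IsCablePath

theorem adj_getElem_iff (hl : IsCablePath G l) {i : ℕ} (hi0 : 0 < i) (hi : i + 1 < l.length)
    {y : V} : G.Adj l[i] y ↔ y = l[i - 1] ∨ y = l[i + 1] := by
  simpa using hl.2.2.2 i hi hi0 y

theorem encard_neighborSet_le_two (hl : IsCablePath G l) {x : V} (hx : x ∈ pathInterior l) :
    (G.neighborSet x).encard ≤ 2 := by
  obtain ⟨i, hi, hi0, rfl⟩ := hx
  calc _ ≤ ({l[i - 1], l[i + 1]} : Set V).encard :=
        Set.encard_mono fun y hy => (hl.adj_getElem_iff hi0 hi).mp hy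
    _ ≤ 2 := (Set.encard_insert_le _ _).trans (by simp; norm_num)

theorem mem_of_adj (hl : IsCablePath G l) {x y : V} (hx : x ∈ pathInterior l) (h : G.Adj x y) :
    y ∈ l := by
  obtain ⟨i, hi, hi0, rfl⟩ := hx
  rcases (hl.adj_getElem_iff hi0 hi).mp h with rfl | rfl <;> exact List.getElem_mem _

theorem eq_of_adj_of_adj (hl : IsCablePath G l) {a u v : V} (ha : a ∉ pathInterior l)
    (hu : u ∈ pathInterior l) (hv : v ∈ pathInterior l) (hau : G.Adj a u) (hav : G.Adj a v) :
    u = v := by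
  obtain ⟨i, hi, hi0, rfl⟩ := hu
  obtain ⟨j, hj, hj0, rfl⟩ := hv
  have hend : ∀ k (hk : k < l.length), l[k] = a → k = 0 ∨ k + 1 = l.length :=
    fun k hk hka => by
      by_contra h
      exact ha ⟨k, by omega, by omega, hka⟩
  have hidx : ∀ k k' (hk : k < l.length) (hk' : k' < l.length),
      l[k] = a → l[k'] = a → k = k' :=
    fun k k' hk hk' h h' => (hl.2.1.getElem_inj_iff).mp (h.trans h'.symm)
  -- `a = l[i ± 1] = l[j ± 1]` is an end of `l`, which rules out `i = j ± 2`
  suffices i = j by simp only [this]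
  rcases (hl.adj_getElem_iff hi0 hi).mp hau.symm with hai | hai <;>
  rcases (hl.adj_getElem_iff hj0 hj).mp hav.symm with haj | haj <;>
  · have := hidx _ _ _ _ hai.symm haj.symm
    have := hend _ _ hai.symm
    omega

end IsCablePath

theorem encard_compl_pathInterior_union_le_four {P Q : List V}
    (hcover : ∀ x, x ∈ P ∨ x ∈ Q) :
    (pathInterior P ∪ pathInterior Q)ᶜ.encard ≤ 4 := by
  have hends : (pathInterior P ∪ pathInterior Q)ᶜ ⊆
      ({x | x ∈ P} \ pathInterior P) ∪ ({x | x ∈ Q} \ pathInterior Q) := by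
    intro x hx
    simp only [Set.mem_compl_iff, Set.mem_union, not_or] at hx
    rcases hcover x with hxP | hxQ
    exacts [.inl ⟨hxP, hx.1⟩, .inr ⟨hxQ, hx.2⟩]
  calc _ ≤ 2 + 2 := (Set.encard_mono hends).trans ((Set.encard_union_le _ _).trans
        (add_le_add (encard_setOf_mem_diff_pathInterior_le_two P)
          (encard_setOf_mem_diff_pathInterior_le_two Q)))
    _ = 4 := by norm_num

theorem subsingleton_neighborSet_inter_pathInterior {P Q : List V} (hP : IsCablePath G P)
    (hQ : IsCablePath G Q) (hdisj : ∀ x ∈ P, x ∉ Q) {a : V}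
    (ha : a ∉ pathInterior P ∪ pathInterior Q) :
    (G.neighborSet a ∩ (pathInterior P ∪ pathInterior Q)).Subsingleton := by
  rintro u ⟨hau, hu⟩ v ⟨hav, hv⟩
  rw [Set.mem_union, not_or] at ha
  rcases hu with hu | hu <;> rcases hv with hv | hv
  · exact hP.eq_of_adj_of_adj ha.1 hu hv hau hav
  · exact absurd (hQ.mem_of_adj hv hav.symm) (hdisj a (hP.mem_of_adj hu hau.symm))
  · exact absurd (hQ.mem_of_adj hu hau.symm) (hdisj a (hP.mem_of_adj hv hav.symm))
  · exact hQ.eq_of_adj_of_adj ha.2 hu hv hau hav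

end CablePath

/-- A 2-connected graph whose vertex set is partitioned into two cable paths can be
turned into a cactus by contracting at most 3 edges. -/
theorem stmt9 {V : Type u} (G : SimpleGraph V) (hG : TwoConnected G)
    (P Q : List V) (hP : IsCablePath G P) (hQ : IsCablePath G Q)
    (hpart : ∀ x : V, x ∈ P ↔ x ∉ Q) :
    KContractibleToCactus G 3 := by
  set A : Set V := (pathInterior P ∪ pathInterior Q)ᶜ
  have hA : A.encard ≤ 4 := encard_compl_pathInterior_union_le_four fun x =>
    (em (x ∈ Q)).elim .inr fun hxQ => .inl ((hpart x).mpr hxQ)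
  have hout : ∀ x ∉ A, (G.neighborSet x).encard ≤ 2 := fun x hx =>
    (not_not.mp hx).elim hP.encard_neighborSet_le_two hQ.encard_neighborSet_le_two
  have hin : ∀ a ∈ A, (G.neighborSet a \ A).Subsingleton := fun a ha => by
    rw [Set.sdiff_compl]
    exact subsingleton_neighborSet_inter_pathInterior hP hQ (fun x => (hpart x).mp) ha
  obtain ⟨F, hF, hFcard, hspan⟩ :=
    G.exists_edges_ncard_le_reachable (Set.finite_of_encard_le_coe hA)
  have hA' : A.ncard ≤ 4 := (Set.encard_le_coe_iff_finite_ncard_le (k := 4)).mp hA |>.2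
  refine ⟨F, fun e he => (hF he).1, by omega, isCactus_of_subsingleton_highDegreeSet
    (contract_connected F hG.1) (highDegreeSet_contract_subsingleton (hA.trans (by norm_num))
      hout hin (fun e he => (hF he).2) hspan)⟩
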